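/- arXiv:1310.0066 — 3 statements merged into one kernel-verified Lean document; each statement's English description precedes it below -/
import Mathlib

section
/- Let H be a complex Hilbert space and A : H →L[ℂ] H a bounded linear operator with Re⟨Aφ,φ⟩ ≥ 0 for all φ ∈ H. Then for every τ > 0 the operator I + (τ/2)A is invertible and the Crank–Nicolson operator R = (I + (τ/2)A)^{−1}(I − (τ/2)A) satisfies ‖Rⁿ‖ ≤ 1 for all n ∈ ℕ. -/
/-!
For an accretive `B`, expanding `‖x ± B x‖²` gives `‖x‖ ≤ ‖x + B x‖` and `‖x - B x‖ ≤ ‖x + B x‖`.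
The first makes `1 + B` bounded below; since the adjoint of `B` is accretive as well, the same
holds for `(1 + B)†`, whose kernel is the orthogonal complement of the range of `1 + B`, so
`1 + B` is invertible. As `1 + B` commutes with `1 - B`, the second inequality, read at
`x = (1 + B)⁻¹ z`, says that `(1 + B)⁻¹ (1 - B)` is a contraction. Take `B = (τ/2) A`.
-/

open scoped InnerProductSpace

namespace ContinuousLinearMap

variable {𝕜 E : Type*} [RCLike 𝕜] [NormedAddCommGroup E] [InnerProductSpace 𝕜 E]

def IsAccretive (B : E →L[𝕜] E) : Prop :=
  ∀ x, 0 ≤ RCLike.re ⟪B x, x⟫_𝕜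

namespace IsAccretive

variable {B : E →L[𝕜] E}

lemma smul_of_nonneg (hB : B.IsAccretive) {c : ℝ} (hc : 0 ≤ c) : ((c : 𝕜) • B).IsAccretive :=
  fun x => by
    simpa [inner_smul_left] using mul_nonneg hc (hB x)

lemma adjoint [CompleteSpace E] (hB : B.IsAccretive) :
    (ContinuousLinearMap.adjoint B).IsAccretive := fun x => by
  rw [adjoint_inner_left, inner_re_symm]
  exact hB x

lemma norm_le_norm_add_apply (hB : B.IsAccretive) (x : E) : ‖x‖ ≤ ‖x + B x‖ := by
  have h := hB x
  rw [inner_re_symm] at h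
  refine le_of_sq_le_sq ?_ (norm_nonneg _)
  rw [@norm_add_sq 𝕜]
  nlinarith [sq_nonneg ‖B x‖]

lemma norm_sub_apply_le_norm_add_apply (hB : B.IsAccretive) (x : E) :
    ‖x - B x‖ ≤ ‖x + B x‖ := by
  have h := hB x
  rw [inner_re_symm] at h
  refine le_of_sq_le_sq ?_ (norm_nonneg _)
  rw [@norm_add_sq 𝕜, @norm_sub_sq 𝕜]
  linarith

lemma antilipschitz_one_add (hB : B.IsAccretive) :
    AntilipschitzWith 1 ((1 + B : E →L[𝕜] E) : E → E) :=
  AddMonoidHomClass.antilipschitz_of_bound _ fun x => by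
    simpa using hB.norm_le_norm_add_apply x

lemma isUnit_one_add [CompleteSpace E] (hB : B.IsAccretive) : IsUnit (1 + B) := by
  refine isUnit_iff_bijective.mpr <|
    (bijective_iff_dense_range_and_antilipschitz _).mpr ⟨?_, 1, hB.antilipschitz_one_add⟩
  rw [Submodule.topologicalClosure_eq_top_iff, orthogonal_range, LinearMap.ker_eq_bot]
  have h : ContinuousLinearMap.adjoint (1 + B) = 1 + ContinuousLinearMap.adjoint B := by
    rw [← star_eq_adjoint, ← star_eq_adjoint, star_add, star_one]
  rw [h]
  exact hB.adjoint.antilipschitz_one_add.injective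

lemma norm_inverse_one_add_mul_one_sub_le_one [CompleteSpace E] (hB : B.IsAccretive) :
    ‖Ring.inverse (1 + B) * (1 - B)‖ ≤ 1 := by
  obtain ⟨u, hu⟩ := hB.isUnit_one_add
  have hcomm : Commute (1 - B) (u⁻¹ : (E →L[𝕜] E)ˣ) :=
    Commute.units_inv_right <| hu ▸
      (Commute.one_right _).add_right ((Commute.one_left B).sub_left (Commute.refl B))
  rw [← hu, Ring.inverse_unit, ← hcomm.eq]
  refine opNorm_le_bound _ zero_le_one fun z => ?_
  obtain ⟨x, rfl⟩ : ∃ x, (u : E →L[𝕜] E) x = z :=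
    ⟨((u⁻¹ : (E →L[𝕜] E)ˣ) : E →L[𝕜] E) z, by
      rw [← mul_apply_eq_comp, u.mul_inv, one_apply_eq_self]⟩
  rw [mul_apply_eq_comp, ← mul_apply_eq_comp _ (u : E →L[𝕜] E), u.inv_mul, one_apply_eq_self,
    one_mul, hu]
  simpa using hB.norm_sub_apply_le_norm_add_apply x

end IsAccretive

lemma norm_pow_le_one {R : E →L[𝕜] E} (hR : ‖R‖ ≤ 1) (n : ℕ) : ‖R ^ n‖ ≤ 1 := by
  rcases n.eq_zero_or_pos with rfl | hn
  · exact norm_id_le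
  · exact (norm_pow_le' R hn).trans (pow_le_one₀ (norm_nonneg R) hR)

end ContinuousLinearMap

/-- Unconditional stability of the Crank–Nicolson scheme: if `A` is a bounded
accretive operator on a complex Hilbert space (`Re⟨Aφ,φ⟩ ≥ 0`), then for every
`τ > 0` the operator `I + (τ/2)A` is invertible and every power of the
Crank–Nicolson operator `R = (I + (τ/2)A)⁻¹ (I - (τ/2)A)` is a contraction. -/
theorem crank_nicolson_stability
    {H : Type*} [NormedAddCommGroup H] [InnerProductSpace ℂ H] [CompleteSpace H]
    (A : H →L[ℂ] H)
    (hacc : ∀ φ : H, 0 ≤ (inner ℂ (A φ) φ : ℂ).re)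
    (τ : ℝ) (hτ : 0 < τ) :
    IsUnit (1 + ((τ / 2 : ℝ) : ℂ) • A) ∧
    ∀ n : ℕ,
      ‖(Ring.inverse (1 + ((τ / 2 : ℝ) : ℂ) • A) * (1 - ((τ / 2 : ℝ) : ℂ) • A)) ^ n‖ ≤ 1 := by
  have hB : (((τ / 2 : ℝ) : ℂ) • A).IsAccretive :=
    ContinuousLinearMap.IsAccretive.smul_of_nonneg (B := A) hacc (half_pos hτ).le
  exact ⟨hB.isUnit_one_add,
    ContinuousLinearMap.norm_pow_le_one hB.norm_inverse_one_add_mul_one_sub_le_one⟩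
end

section
/- Let r_{cn}(z) = (1 − z/2)/(1 + z/2). For every δ₁ ∈ (0, π/2) and R > 0 there exist constants c, C > 0 such that for every natural number n ≥ 1 and every z with |arg z| ≤ δ₁ and |z| ≤ R, the estimate |e^{−nz} − r_{cn}(z)ⁿ| ≤ C n |z|³ e^{−c n |z|} holds. -/
/-!
Write `r(z) = (1 - z/2)/(1 + z/2)`. On a sector `|arg z| ≤ δ₁ < π/2` one has `Re z ≥ cos δ₁ ‖z‖`,
and `‖1 - z/2‖² = ‖1 + z/2‖² - 2 Re z`; since `‖1 + z/2‖` stays bounded for `‖z‖ ≤ R`, both `e^{-z}`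
and `r(z)` have modulus at most `e^{-c‖z‖}`. The one-step error `e^{-z} - r(z)` is `O(‖z‖³)`
(Taylor expansion of `e^{-z}` to second order), and `aⁿ - bⁿ = (a - b) ∑_{j<n} a^j b^{n-1-j}`
multiplies it by `n e^{-c(n-1)‖z‖}`.
-/

open Real

noncomputable def crankNicolson (z : ℂ) : ℂ := (1 - z / 2) / (1 + z / 2)

section Telescoping

variable {A : Type*} [SeminormedCommRing A] [NormOneClass A]

theorem norm_pow_sub_pow_le {a b : A} {M : ℝ} (ha : ‖a‖ ≤ M) (hb : ‖b‖ ≤ M) (n : ℕ) :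
    ‖a ^ n - b ^ n‖ ≤ n * ‖a - b‖ * M ^ (n - 1) := by
  have hM : 0 ≤ M := (norm_nonneg a).trans ha
  have hterm : ∀ i ∈ Finset.range n, ‖a ^ i * b ^ (n - 1 - i)‖ ≤ M ^ (n - 1) := by
    intro i hi
    have hi : i ≤ n - 1 := by grind
    calc ‖a ^ i * b ^ (n - 1 - i)‖ ≤ ‖a‖ ^ i * ‖b‖ ^ (n - 1 - i) :=
          norm_mul_le_of_le (norm_pow_le a i) (norm_pow_le b _)
      _ ≤ M ^ i * M ^ (n - 1 - i) := by gcongr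
      _ = M ^ (n - 1) := by rw [← pow_add, Nat.add_sub_cancel' hi]
  rw [← geom_sum₂_mul]
  calc ‖(∑ i ∈ Finset.range n, a ^ i * b ^ (n - 1 - i)) * (a - b)‖
      ≤ ‖∑ i ∈ Finset.range n, a ^ i * b ^ (n - 1 - i)‖ * ‖a - b‖ := norm_mul_le _ _
    _ ≤ n * M ^ (n - 1) * ‖a - b‖ := by
        gcongr
        simpa using norm_sum_le_of_le (Finset.range n) hterm
    _ = n * ‖a - b‖ * M ^ (n - 1) := by ring

theorem norm_pow_sub_pow_le_of_norm_le_exp {a b : A} {t : ℝ} (ha : ‖a‖ ≤ exp (-t))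
    (hb : ‖b‖ ≤ exp (-t)) (n : ℕ) :
    ‖a ^ n - b ^ n‖ ≤ ‖a - b‖ * n * exp t * exp (-(n * t)) := by
  rcases n with _ | n
  · simp
  calc ‖a ^ (n + 1) - b ^ (n + 1)‖ ≤ (n + 1 : ℕ) * ‖a - b‖ * exp (-t) ^ n := by
        simpa using norm_pow_sub_pow_le ha hb (n + 1)
    _ = ‖a - b‖ * (n + 1 : ℕ) * exp t * exp (-((n + 1 : ℕ) * t)) := by
        rw [← exp_nat_mul, mul_assoc _ (exp t), ← exp_add]
        push_cast
        ring_nf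

end Telescoping

theorem cos_mul_norm_le_re_of_abs_arg_le {z : ℂ} {δ : ℝ} (hδ : δ ≤ π) (harg : |z.arg| ≤ δ) :
    cos δ * ‖z‖ ≤ z.re := by
  rw [← Complex.norm_mul_cos_arg z, mul_comm, ← cos_abs z.arg]
  gcongr
  exact cos_le_cos_of_nonneg_of_le_pi (abs_nonneg _) hδ harg

section CrankNicolson

variable {z : ℂ}

theorem norm_one_sub_half_sq (z : ℂ) : ‖1 - z / 2‖ ^ 2 = ‖1 + z / 2‖ ^ 2 - 2 * z.re := by
  simp only [Complex.sq_norm, Complex.normSq_apply, Complex.add_re, Complex.add_im, Complex.sub_re,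
    Complex.sub_im, Complex.one_re, Complex.one_im, Complex.div_ofNat_re, Complex.div_ofNat_im]
  ring

theorem norm_one_add_half_le (z : ℂ) : ‖1 + z / 2‖ ≤ 1 + ‖z‖ / 2 :=
  (norm_add_le _ _).trans_eq (by rw [norm_one, norm_div, Complex.norm_two])

theorem one_le_norm_one_add_half (hz : 0 ≤ z.re) : 1 ≤ ‖1 + z / 2‖ := by
  have := Complex.re_le_norm (1 + z / 2)
  simp only [Complex.add_re, Complex.one_re, Complex.div_ofNat_re] at this
  linarith

theorem norm_crankNicolson_le_exp {c : ℝ} (h : c * ‖z‖ * ‖1 + z / 2‖ ^ 2 ≤ z.re) :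
    ‖crankNicolson z‖ ≤ exp (-(c * ‖z‖)) := by
  rw [← pow_le_pow_iff_left₀ (norm_nonneg _) (exp_pos _).le two_ne_zero, crankNicolson,
    norm_div, div_pow, norm_one_sub_half_sq]
  refine div_le_of_le_mul₀ (sq_nonneg _) (sq_nonneg _) ?_
  have hexp : 1 - 2 * (c * ‖z‖) ≤ exp (-(c * ‖z‖)) ^ 2 := by
    rw [sq, ← exp_add]
    linarith [add_one_le_exp (-(c * ‖z‖) + -(c * ‖z‖))]
  nlinarith [mul_le_mul_of_nonneg_right hexp (sq_nonneg ‖1 + z / 2‖)]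

theorem norm_crankNicolson_le_one (hz : 0 ≤ z.re) : ‖crankNicolson z‖ ≤ 1 := by
  simpa using norm_crankNicolson_le_exp (c := 0) (by simpa using hz)

theorem norm_exp_neg_sub_crankNicolson_le_of_norm_le_one (hz : 0 ≤ z.re) (hs : ‖z‖ ≤ 1) :
    ‖Complex.exp (-z) - crankNicolson z‖ ≤ ‖z‖ ^ 3 := by
  set E := Complex.exp (-z) - (1 - z + z ^ 2 / 2)
  have hE : ‖E‖ ≤ 2 / 9 * ‖z‖ ^ 3 := by
    have := Complex.exp_bound (x := -z) (by rwa [norm_neg]) (n := 3) (by norm_num)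
    norm_num [Finset.sum_range_succ, Nat.factorial] at this
    rw [mul_comm]
    convert this using 3
    ring
  have hD := one_le_norm_one_add_half hz
  have hD' : ‖1 + z / 2‖ ≤ 3 / 2 := by linarith [norm_one_add_half_le z]
  -- `(1 - z + z²/2)(1 + z/2) = 1 - z/2 + z³/4`
  have hid : Complex.exp (-z) - crankNicolson z = (z ^ 3 / 4 + E * (1 + z / 2)) / (1 + z / 2) := by
    have hne : 1 + z / 2 ≠ 0 := norm_pos_iff.mp (by linarith)
    rw [crankNicolson, eq_div_iff hne, sub_mul, div_mul_cancel₀ _ hne]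
    ring
  rw [hid, norm_div]
  calc ‖z ^ 3 / 4 + E * (1 + z / 2)‖ / ‖1 + z / 2‖
      ≤ ‖z ^ 3 / 4 + E * (1 + z / 2)‖ := div_le_self (norm_nonneg _) hD
    _ ≤ ‖z‖ ^ 3 / 4 + ‖E‖ * ‖1 + z / 2‖ := by
        refine (norm_add_le _ _).trans_eq ?_
        rw [norm_mul, norm_div, norm_pow]
        norm_num
    _ ≤ ‖z‖ ^ 3 / 4 + 2 / 9 * ‖z‖ ^ 3 * (3 / 2) := by gcongr
    _ ≤ ‖z‖ ^ 3 := by linarith [pow_nonneg (norm_nonneg z) 3]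

theorem norm_exp_neg_sub_crankNicolson_le (hz : 0 ≤ z.re) :
    ‖Complex.exp (-z) - crankNicolson z‖ ≤ 2 * ‖z‖ ^ 3 := by
  rcases le_or_gt ‖z‖ 1 with hs | hs
  · linarith [norm_exp_neg_sub_crankNicolson_le_of_norm_le_one hz hs, pow_nonneg (norm_nonneg z) 3]
  · have hexp : ‖Complex.exp (-z)‖ ≤ 1 := by
      rw [Complex.norm_exp, Complex.neg_re, exp_le_one_iff]
      linarith
    calc ‖Complex.exp (-z) - crankNicolson z‖ ≤ ‖Complex.exp (-z)‖ + ‖crankNicolson z‖ :=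
          norm_sub_le _ _
      _ ≤ 1 + 1 := add_le_add hexp (norm_crankNicolson_le_one hz)
      _ ≤ 2 * ‖z‖ ^ 3 := by linarith [one_lt_pow₀ hs three_ne_zero]

end CrankNicolson

/-- Crank–Nicolson error bound on the bounded sector: for `|arg z| ≤ δ₁ < π/2`
and `|z| ≤ R`, `|e^{-nz} - r_cn(z)ⁿ| ≤ C n |z|³ e^{-c n |z|}` where
`r_cn(z) = (1 - z/2)/(1 + z/2)`. -/
theorem crank_nicolson_consistency_bounded_sector
    (δ₁ R : ℝ) (hδ : δ₁ ∈ Set.Ioo 0 (π / 2)) (hR : 0 < R) :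
    ∃ c > (0 : ℝ), ∃ C > (0 : ℝ), ∀ n : ℕ, 1 ≤ n → ∀ z : ℂ,
      |z.arg| ≤ δ₁ → ‖z‖ ≤ R →
      ‖Complex.exp (-(n : ℂ) * z) - ((1 - z / 2) / (1 + z / 2)) ^ n‖ ≤
        C * n * ‖z‖ ^ 3 * Real.exp (-(c * n * ‖z‖)) := by
  obtain ⟨hδ0, hδπ⟩ := hδ
  set k := cos δ₁
  have hk : 0 < k := cos_pos_of_mem_Ioo ⟨by linarith [pi_pos], hδπ⟩
  set c := k / (1 + R / 2) ^ 2
  have hc : 0 < c := by positivity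
  have hck : c * (1 + R / 2) ^ 2 = k := div_mul_cancel₀ _ (by positivity)
  have hck' : c ≤ k := hck ▸ le_mul_of_one_le_right hc.le (one_le_pow₀ (by linarith))
  refine ⟨c, hc, 2 * exp (c * R), by positivity, fun n _ z harg hzR => ?_⟩
  have hsector : k * ‖z‖ ≤ z.re := cos_mul_norm_le_re_of_abs_arg_le (by linarith) harg
  have hre : 0 ≤ z.re := hsector.trans' (by positivity)
  have hcD : c * ‖1 + z / 2‖ ^ 2 ≤ k := by
    rw [← hck]
    gcongr
    linarith [norm_one_add_half_le z]
  have hexp : ‖Complex.exp (-z)‖ ≤ exp (-(c * ‖z‖)) := by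
    rw [Complex.norm_exp, Complex.neg_re]
    gcongr
    nlinarith [norm_nonneg z]
  have hr : ‖crankNicolson z‖ ≤ exp (-(c * ‖z‖)) :=
    norm_crankNicolson_le_exp (by nlinarith [norm_nonneg z])
  have hcons := norm_exp_neg_sub_crankNicolson_le hre
  rw [neg_mul, ← mul_neg, Complex.exp_nat_mul]
  calc ‖Complex.exp (-z) ^ n - crankNicolson z ^ n‖
      ≤ ‖Complex.exp (-z) - crankNicolson z‖ * n * exp (c * ‖z‖) * exp (-(n * (c * ‖z‖))) :=
        norm_pow_sub_pow_le_of_norm_le_exp hexp hr n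
    _ ≤ 2 * ‖z‖ ^ 3 * n * exp (c * R) * exp (-(n * (c * ‖z‖))) := by gcongr
    _ = 2 * exp (c * R) * n * ‖z‖ ^ 3 * exp (-(c * n * ‖z‖)) := by ring_nf
end

section
/- Let H be a Hilbert space, E(t) = e^{−tA} an analytic semigroup generated by a sectorial operator −A with smoothing ‖A^γ E(t)‖ ≤ C t^{−γ} for γ ∈ [0, 3/2], and let B(s) = (I + sA)^{−1} with ‖A^γ B(s)^{n}‖ ≤ C n^{−γ} s^{−γ}. Then for n ≥ 1 and τ > 0, the backward-Euler error operator satisfies the integral identity E(nτ) − (I+τA)^{−n} = −∫₀^τ n s A² E(n(τ−s)) (I+sA)^{−n−1} ds, and consequently ‖(E(nτ) − (I+τA)^{−n}) v‖ ≤ C τ ‖A v‖ for every v ∈ D(A). -/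
/-!
Write `E(t) = semigroup A t` and `(1 + sA)⁻¹ = step A s`. Differentiating
`s ↦ E(n(τ - s)) (1 + sA)⁻ⁿ` and using `(1 + sA)⁻ⁿ - (1 + sA)⁻ⁿ⁻¹ = sA (1 + sA)⁻ⁿ⁻¹` gives the
integral identity. Its integrand is `K(s) A` with `K(s) = ns A E(n(τ - s)) (1 + sA)⁻ⁿ⁻¹`
(`errorKernel`), and `‖∫₀^τ K‖ ≤ C'τ` follows by splitting `[0, τ]` at `τ/2`: on the first half
the factor `A` is absorbed by `E(n(τ - s))`, on the second by `(1 + sA)⁻ⁿ⁻¹`, via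
`‖A E(t)‖ ≤ C/t` and `‖A (1 + sA)⁻ᵐ‖ ≤ C/(ms)`. The remaining factors need uniform bounds, which
come from the same two estimates: `E(t) - (1 + tA)⁻¹ = -(∫₀^t r A E(r) dr) A (1 + tA)⁻¹`, so `E`
is bounded, and then the integral identity, split in the same way with both factors `A` absorbed,
bounds `(1 + τA)⁻ⁿ`.
-/

open MeasureTheory

theorem Commute.ringInverse_right {M₀ : Type*} [MonoidWithZero M₀] {a b : M₀}
    (h : Commute a b) : Commute a (Ring.inverse b) := by
  by_cases hb : IsUnit b
  · obtain ⟨u, rfl⟩ := hb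
    rw [Ring.inverse_unit]
    exact h.units_inv_right
  · rw [Ring.inverse_non_unit _ hb]
    exact Commute.zero_right a

namespace intervalIntegral

theorem integral_mul_const_of_intervalIntegrable {𝔸 : Type*} [NonUnitalNormedRing 𝔸]
    [NormedSpace ℝ 𝔸] [IsScalarTower ℝ 𝔸 𝔸] [SMulCommClass ℝ 𝔸 𝔸] [CompleteSpace 𝔸]
    {f : ℝ → 𝔸} {a b : ℝ} (hf : IntervalIntegrable f volume a b) (c : 𝔸) :
    ∫ x in a..b, f x * c = (∫ x in a..b, f x) * c :=
  ((ContinuousLinearMap.mul ℝ 𝔸).flip c).intervalIntegral_comp_comm hf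

theorem norm_integral_le_of_halves {E : Type*} [NormedAddCommGroup E] [NormedSpace ℝ E]
    {f : ℝ → E} {τ K₁ K₂ : ℝ} (hτ : 0 ≤ τ) (hf : IntervalIntegrable f volume 0 τ)
    (h₁ : ∀ s ∈ Set.Ioc 0 (τ / 2), ‖f s‖ ≤ K₁) (h₂ : ∀ s ∈ Set.Ioc (τ / 2) τ, ‖f s‖ ≤ K₂) :
    ‖∫ s in (0 : ℝ)..τ, f s‖ ≤ (K₁ + K₂) * (τ / 2) := by
  have hmid : τ / 2 ∈ Set.uIcc 0 τ := by rw [Set.uIcc_of_le hτ]; constructor <;> linarith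
  rw [← integral_add_adjacent_intervals (hf.mono_set (Set.uIcc_subset_uIcc_left hmid))
    (hf.mono_set (Set.uIcc_subset_uIcc_right hmid))]
  have hI₁ : ‖∫ s in (0 : ℝ)..τ / 2, f s‖ ≤ K₁ * |τ / 2 - 0| :=
    norm_integral_le_of_norm_le_const fun s hs =>
      h₁ s (by rwa [Set.uIoc_of_le (by linarith)] at hs)
  have hI₂ : ‖∫ s in τ / 2..τ, f s‖ ≤ K₂ * |τ - τ / 2| :=
    norm_integral_le_of_norm_le_const fun s hs =>
      h₂ s (by rwa [Set.uIoc_of_le (by linarith)] at hs)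
  rw [sub_zero, abs_of_nonneg (by linarith)] at hI₁
  rw [sub_half, abs_of_nonneg (by linarith)] at hI₂
  grw [norm_add_le, hI₁, hI₂, add_mul]

end intervalIntegral

namespace BackwardEuler

variable {𝔸 : Type*} [NormedRing 𝔸] [NormedAlgebra ℂ 𝔸] {C : ℝ}

noncomputable def semigroup (A : 𝔸) (t : ℝ) : 𝔸 := NormedSpace.exp (-((t : ℂ) • A))

noncomputable def step (A : 𝔸) (s : ℝ) : 𝔸 := Ring.inverse (1 + (s : ℂ) • A)

noncomputable def errorKernel (A : 𝔸) (n : ℕ) (τ s : ℝ) : 𝔸 :=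
  ((n * s : ℝ) : ℂ) • (A * semigroup A (n * (τ - s)) * step A s ^ (n + 1))

variable (A : 𝔸)

@[simp] lemma semigroup_zero : semigroup A 0 = 1 := by simp [semigroup]

@[simp] lemma step_zero : step A 0 = 1 := by simp [step]

lemma commute_semigroup (t : ℝ) : Commute A (semigroup A t) :=
  ((Commute.refl A).smul_right _).neg_right.exp_right

lemma commute_step (s : ℝ) : Commute A (step A s) :=
  ((Commute.one_right A).add_right ((Commute.refl A).smul_right _)).ringInverse_right

lemma errorKernel_mul (n : ℕ) (τ s : ℝ) :
    errorKernel A n τ s * A =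
      ((n * s : ℝ) : ℂ) • (A * A * semigroup A (n * (τ - s)) * step A s ^ (n + 1)) := by
  simp only [errorKernel, smul_mul_assoc, mul_assoc, ← ((commute_step A s).pow_right _).eq,
    (commute_semigroup A _).symm.left_comm]

lemma errorKernel_mul' (n : ℕ) (τ s : ℝ) :
    errorKernel A n τ s * A =
      ((n * s : ℝ) : ℂ) • (A * semigroup A (n * (τ - s)) * (A * step A s ^ (n + 1))) := by
  rw [errorKernel, smul_mul_assoc, mul_assoc (A * _), ← ((commute_step A s).pow_right _).eq]

lemma hasDerivAt_one_add_smul (s : ℝ) : HasDerivAt (fun u : ℝ => 1 + (u : ℂ) • A) A s := by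
  simp only [Complex.coe_smul]
  simpa using ((hasDerivAt_id s).smul_const A).const_add 1

variable {A}

lemma isUnit_one_add_smul_of_nonneg (hinv : ∀ s : ℝ, 0 < s → IsUnit (1 + (s : ℂ) • A)) {s : ℝ}
    (hs : 0 ≤ s) : IsUnit (1 + (s : ℂ) • A) :=
  hs.eq_or_lt.elim (fun h => by simp [← h]) (hinv s)

lemma step_pow_sub_step_pow_succ {s : ℝ} (hu : IsUnit (1 + (s : ℂ) • A)) (n : ℕ) :
    step A s ^ n - step A s ^ (n + 1) = (s : ℂ) • (A * step A s ^ (n + 1)) := by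
  have h : step A s ^ (n + 1) * (1 + (s : ℂ) • A) = step A s ^ n := by
    rw [pow_succ, mul_assoc, step, Ring.inverse_mul_cancel _ hu, mul_one]
  rw [← h, mul_add, mul_one, mul_smul_comm, ((commute_step A s).pow_right _).eq]
  abel

lemma mul_norm_mul_semigroup_le (hC : 0 ≤ C)
    (hAE : ∀ t : ℝ, 0 < t → ‖A * semigroup A t‖ ≤ C / t) {r t : ℝ} (hr : 0 ≤ r) (hrt : r ≤ t) :
    r * ‖A * semigroup A t‖ ≤ C := by
  obtain rfl | ht := (hr.trans hrt).eq_or_lt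
  · simp [le_antisymm hrt hr, hC]
  calc r * ‖A * semigroup A t‖ ≤ t * (C / t) := by gcongr; exact hAE t ht
    _ = C := by field_simp

lemma mul_norm_mul_step_pow_le
    (hAB : ∀ n : ℕ, 1 ≤ n → ∀ s : ℝ, 0 < s → ‖A * step A s ^ n‖ ≤ C / (n * s))
    {m : ℕ} (hm : 1 ≤ m) {r s : ℝ} (hs : 0 < s) (hrs : r ≤ m * s) :
    r * ‖A * step A s ^ m‖ ≤ C := by
  have hms : 0 < (m : ℝ) * s := by positivity
  calc r * ‖A * step A s ^ m‖ ≤ (m * s) * (C / (m * s)) := by gcongr; exact hAB m hm s hs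
    _ = C := by field_simp

lemma norm_step_le
    (hAB : ∀ n : ℕ, 1 ≤ n → ∀ s : ℝ, 0 < s → ‖A * step A s ^ n‖ ≤ C / (n * s))
    {s : ℝ} (hs : 0 < s) (hu : IsUnit (1 + (s : ℂ) • A)) : ‖step A s‖ ≤ ‖(1 : 𝔸)‖ + C := by
  have h : step A s = 1 - (s : ℂ) • (A * step A s ^ 1) := by
    rw [← step_pow_sub_step_pow_succ hu 0, pow_zero, zero_add, pow_one]
    abel
  calc ‖step A s‖ = ‖1 - (s : ℂ) • (A * step A s ^ 1)‖ := congrArg _ h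
    _ ≤ ‖(1 : 𝔸)‖ + ‖(s : ℂ) • (A * step A s ^ 1)‖ := norm_sub_le _ _
    _ = ‖(1 : 𝔸)‖ + s * ‖A * step A s ^ 1‖ := by rw [norm_smul, Complex.norm_of_nonneg hs.le]
    _ ≤ ‖(1 : 𝔸)‖ + C := by
        gcongr
        exact mul_norm_mul_step_pow_le hAB le_rfl hs (by simp)

lemma norm_errorKernel_mul_le_of_le_half (hC : 0 ≤ C)
    (hAE : ∀ t : ℝ, 0 < t → ‖A * semigroup A t‖ ≤ C / t)
    (hAB : ∀ n : ℕ, 1 ≤ n → ∀ s : ℝ, 0 < s → ‖A * step A s ^ n‖ ≤ C / (n * s))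
    {n : ℕ} (hn : 1 ≤ n) {τ s : ℝ} (hs : 0 < s) (hsτ : s ≤ τ / 2) :
    ‖errorKernel A n τ s * A‖ ≤ C / (τ / 2) * C := by
  have hn' : (1 : ℝ) ≤ n := by exact_mod_cast hn
  have hτ : 0 < τ := by linarith
  have hAE' : ‖A * semigroup A (n * (τ - s))‖ ≤ C / (τ / 2) :=
    (le_div_iff₀' (by linarith)).2 (mul_norm_mul_semigroup_le hC hAE (by linarith) (by nlinarith))
  have hAB' : (n * s) * ‖A * step A s ^ (n + 1)‖ ≤ C :=
    mul_norm_mul_step_pow_le hAB (by omega) hs (by push_cast; nlinarith)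
  rw [errorKernel_mul', norm_smul, Complex.norm_of_nonneg (by positivity)]
  calc _ ≤ (n * s) * (‖A * semigroup A (n * (τ - s))‖ * ‖A * step A s ^ (n + 1)‖) := by
        gcongr; exact norm_mul_le _ _
    _ = ‖A * semigroup A (n * (τ - s))‖ * ((n * s) * ‖A * step A s ^ (n + 1)‖) := by ring
    _ ≤ C / (τ / 2) * C := by gcongr

lemma norm_errorKernel_mul_le_of_half_lt (hC : 0 ≤ C)
    (hAB : ∀ n : ℕ, 1 ≤ n → ∀ s : ℝ, 0 < s → ‖A * step A s ^ n‖ ≤ C / (n * s))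
    {M : ℝ} (hE : ∀ t : ℝ, 0 ≤ t → ‖semigroup A t‖ ≤ M)
    {n : ℕ} (hn : 1 ≤ n) {τ s : ℝ} (hτ : 0 < τ) (hsτ : τ / 2 < s) (hs : s ≤ τ) :
    ‖errorKernel A n τ s * A‖ ≤ M * (C / (τ / 2)) * C := by
  have hs0 : 0 < s := by linarith
  have hAB₁ : ‖A * step A s ^ 1‖ ≤ C / (τ / 2) :=
    (le_div_iff₀' (by linarith)).2
      (mul_norm_mul_step_pow_le hAB le_rfl hs0 (by push_cast; linarith))
  have hM : 0 ≤ M := (norm_nonneg _).trans (hE 0 le_rfl)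
  have hEs : ‖semigroup A (n * (τ - s))‖ ≤ M := hE _ (mul_nonneg n.cast_nonneg (sub_nonneg.2 hs))
  have hAB' : (n * s) * ‖A * step A s ^ n‖ ≤ C := mul_norm_mul_step_pow_le hAB hn hs0 le_rfl
  have hfac : A * semigroup A (n * (τ - s)) * (A * step A s ^ (n + 1)) =
      semigroup A (n * (τ - s)) * (A * step A s ^ 1) * (A * step A s ^ n) := by
    simp only [mul_assoc, pow_succ' (step A s) n, pow_one, (commute_step A s).symm.left_comm,
      (commute_semigroup A _).left_comm]
  rw [errorKernel_mul', hfac, norm_smul, Complex.norm_of_nonneg (by positivity)]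
  calc _ ≤ (n * s) * (‖semigroup A (n * (τ - s))‖ * ‖A * step A s ^ 1‖ *
        ‖A * step A s ^ n‖) := by
        gcongr; exact norm_mul₃_le
    _ = ‖semigroup A (n * (τ - s))‖ * ‖A * step A s ^ 1‖ * ((n * s) * ‖A * step A s ^ n‖) := by
        ring
    _ ≤ M * (C / (τ / 2)) * C := by gcongr

lemma norm_errorKernel_le_of_le_half (hC : 0 ≤ C)
    (hAE : ∀ t : ℝ, 0 < t → ‖A * semigroup A t‖ ≤ C / t)
    {M' : ℝ} (hB : ∀ m : ℕ, 1 ≤ m → ∀ s : ℝ, 0 < s → ‖step A s ^ m‖ ≤ M')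
    (n : ℕ) {τ s : ℝ} (hs : 0 < s) (hsτ : s ≤ τ / 2) : ‖errorKernel A n τ s‖ ≤ C * M' := by
  have hAE' : (n * s) * ‖A * semigroup A (n * (τ - s))‖ ≤ C :=
    mul_norm_mul_semigroup_le hC hAE (by positivity) (by gcongr; linarith)
  rw [errorKernel, norm_smul, Complex.norm_of_nonneg (by positivity)]
  calc _ ≤ (n * s) * (‖A * semigroup A (n * (τ - s))‖ * ‖step A s ^ (n + 1)‖) := by
        gcongr; exact norm_mul_le _ _
    _ = (n * s) * ‖A * semigroup A (n * (τ - s))‖ * ‖step A s ^ (n + 1)‖ := by ring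
    _ ≤ C * M' := by gcongr; exact hB _ (by omega) s hs

lemma norm_errorKernel_le_of_half_lt
    (hAB : ∀ n : ℕ, 1 ≤ n → ∀ s : ℝ, 0 < s → ‖A * step A s ^ n‖ ≤ C / (n * s))
    {M : ℝ} (hE : ∀ t : ℝ, 0 ≤ t → ‖semigroup A t‖ ≤ M)
    (n : ℕ) {τ s : ℝ} (hsτ : τ / 2 < s) (hs : s ≤ τ) : ‖errorKernel A n τ s‖ ≤ M * C := by
  have hs0 : 0 < s := by linarith
  have hAB' : (n * s) * ‖A * step A s ^ (n + 1)‖ ≤ C :=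
    mul_norm_mul_step_pow_le hAB (by omega) hs0 (by push_cast; nlinarith)
  rw [errorKernel, (commute_semigroup A _).eq, mul_assoc, norm_smul,
    Complex.norm_of_nonneg (by positivity)]
  calc _ ≤ (n * s) * (‖semigroup A (n * (τ - s))‖ * ‖A * step A s ^ (n + 1)‖) := by
        gcongr; exact norm_mul_le _ _
    _ = ‖semigroup A (n * (τ - s))‖ * ((n * s) * ‖A * step A s ^ (n + 1)‖) := by ring
    _ ≤ M * C := by
        gcongr
        · exact (norm_nonneg _).trans (hE 0 le_rfl)
        · exact hE _ (mul_nonneg n.cast_nonneg (sub_nonneg.2 hs))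

variable [CompleteSpace 𝔸]

lemma hasDerivAt_semigroup (A : 𝔸) (t : ℝ) :
    HasDerivAt (semigroup A) (-(A * semigroup A t)) t := by
  have h : semigroup A = fun u : ℝ => NormedSpace.exp (u • -A) := by
    ext u; rw [semigroup, smul_neg, Complex.coe_smul]
  rw [h, ← neg_mul]
  exact hasDerivAt_exp_smul_const' (-A) t

lemma continuous_semigroup (A : 𝔸) : Continuous (semigroup A) :=
  continuous_iff_continuousAt.2 fun t => (hasDerivAt_semigroup A t).continuousAt

lemma hasDerivAt_step {s : ℝ} (hu : IsUnit (1 + (s : ℂ) • A)) :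
    HasDerivAt (step A) (-(A * step A s ^ 2)) s := by
  have hf := (hasFDerivAt_ringInverse (𝕜 := ℂ) hu.unit).restrictScalars ℝ
  rw [hu.unit_spec] at hf
  have hinv : ((hu.unit⁻¹ : 𝔸ˣ) : 𝔸) = step A s := by
    rw [step, ← Ring.inverse_unit, hu.unit_spec]
  refine (hf.comp_hasDerivAt s (hasDerivAt_one_add_smul A s)).congr_deriv ?_
  change -(_ * A * _) = _
  rw [hinv, ← (commute_step A s).eq, mul_assoc, sq]

lemma hasDerivAt_step_pow {s : ℝ} (hu : IsUnit (1 + (s : ℂ) • A)) (n : ℕ) :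
    HasDerivAt (fun u => step A u ^ n) (-((n : ℂ) • (A * step A s ^ (n + 1)))) s := by
  induction n with
  | zero => simpa using hasDerivAt_const s (1 : 𝔸)
  | succ k ih =>
    convert ih.fun_mul (hasDerivAt_step hu) using 1
    · ext u; exact pow_succ _ _
    · have hc := ((commute_step A s).pow_right k).eq
      simp only [Nat.cast_succ, add_smul, one_smul, neg_mul, mul_neg, smul_mul_assoc, mul_assoc,
        ← pow_succ, ← mul_assoc (step A s ^ k), ← hc]
      rw [← pow_add, neg_add]

lemma continuousOn_step (hinv : ∀ s : ℝ, 0 < s → IsUnit (1 + (s : ℂ) • A)) :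
    ContinuousOn (step A) (Set.Ici 0) := fun _ hs =>
  (hasDerivAt_step (isUnit_one_add_smul_of_nonneg hinv hs)).continuousAt.continuousWithinAt

lemma intervalIntegrable_errorKernel (hinv : ∀ s : ℝ, 0 < s → IsUnit (1 + (s : ℂ) • A))
    (n : ℕ) {τ : ℝ} (hτ : 0 ≤ τ) : IntervalIntegrable (errorKernel A n τ) volume 0 τ := by
  have := continuousOn_step hinv
  have := continuous_semigroup A
  refine ContinuousOn.intervalIntegrable (Set.uIcc_of_le hτ ▸ ?_)
  refine ContinuousOn.mono ?_ Set.Icc_subset_Ici_self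
  unfold errorKernel
  fun_prop

lemma semigroup_mul_one_add_smul_sub_one (A : 𝔸) (t : ℝ) :
    semigroup A t * (1 + (t : ℂ) • A) - 1 =
      -((∫ r in (0 : ℝ)..t, (r : ℂ) • (A * semigroup A r)) * A) := by
  have hderiv : ∀ r ∈ Set.uIcc 0 t, HasDerivAt (fun u => semigroup A u * (1 + (u : ℂ) • A))
      (-((r : ℂ) • (A * semigroup A r) * A)) r := by
    intro r _
    refine ((hasDerivAt_semigroup A r).mul (hasDerivAt_one_add_smul A r)).congr_deriv ?_
    simp only [neg_mul, mul_add, mul_one, mul_smul_comm, smul_mul_assoc,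
      ← (commute_semigroup A r).eq]
    module
  have hcont : Continuous fun r : ℝ => (r : ℂ) • (A * semigroup A r) := by
    have := continuous_semigroup A
    fun_prop
  rw [← intervalIntegral.integral_mul_const_of_intervalIntegrable (hcont.intervalIntegrable 0 t),
    ← intervalIntegral.integral_neg, intervalIntegral.integral_eq_sub_of_hasDerivAt hderiv
      ((hcont.mul continuous_const).neg.intervalIntegrable 0 t)]
  simp

lemma semigroup_sub_step {t : ℝ} (hu : IsUnit (1 + (t : ℂ) • A)) :
    semigroup A t - step A t =
      -((∫ r in (0 : ℝ)..t, (r : ℂ) • (A * semigroup A r)) * (A * step A t)) := by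
  have h : semigroup A t - step A t = (semigroup A t * (1 + (t : ℂ) • A) - 1) * step A t := by
    rw [sub_mul, mul_assoc, step, Ring.mul_inverse_cancel _ hu, mul_one, one_mul]
  rw [h, semigroup_mul_one_add_smul_sub_one, neg_mul, mul_assoc]

lemma hasDerivAt_semigroup_mul_step_pow {s : ℝ} (hu : IsUnit (1 + (s : ℂ) • A)) (n : ℕ)
    (τ : ℝ) :
    HasDerivAt (fun u => semigroup A (n * (τ - u)) * step A u ^ n)
      (((n * s : ℝ) : ℂ) • (A * A * semigroup A (n * (τ - s)) * step A s ^ (n + 1))) s := by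
  set e := semigroup A (n * (τ - s))
  have hc : Commute A e := commute_semigroup A _
  have hE : HasDerivAt (fun u => semigroup A (n * (τ - u))) ((n : ℂ) • (A * e)) s := by
    have hlin : HasDerivAt (fun u : ℝ => n * (τ - u)) (-n) s := by
      simpa using ((hasDerivAt_id s).const_sub τ).const_mul (n : ℝ)
    refine ((hasDerivAt_semigroup A _).scomp s hlin).congr_deriv ?_
    rw [neg_smul_neg, ← Complex.coe_smul]
    norm_cast
  refine (hE.mul (hasDerivAt_step_pow hu n)).congr_deriv ?_
  calc (n : ℂ) • (A * e) * step A s ^ n + e * -((n : ℂ) • (A * step A s ^ (n + 1)))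
      = (n : ℂ) • (A * e * (step A s ^ n - step A s ^ (n + 1))) := by
        rw [mul_sub, mul_neg, mul_smul_comm, ← mul_assoc, ← hc.eq, smul_mul_assoc, smul_sub,
          sub_eq_add_neg]
    _ = _ := by
        rw [step_pow_sub_step_pow_succ hu, mul_smul_comm, smul_smul, ← mul_assoc, mul_assoc A e,
          ← hc.eq, ← mul_assoc]
        push_cast
        rfl

theorem semigroup_sub_step_pow (hinv : ∀ s : ℝ, 0 < s → IsUnit (1 + (s : ℂ) • A)) (n : ℕ)
    {τ : ℝ} (hτ : 0 ≤ τ) :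
    semigroup A (n * τ) - step A τ ^ n =
      -∫ s in (0 : ℝ)..τ,
        ((n * s : ℝ) : ℂ) • (A * A * semigroup A (n * (τ - s)) * step A s ^ (n + 1)) := by
  have hint := (intervalIntegrable_errorKernel hinv n hτ).mul_const A
  simp only [errorKernel_mul] at hint
  rw [intervalIntegral.integral_eq_sub_of_hasDerivAt (fun s hs =>
    hasDerivAt_semigroup_mul_step_pow (isUnit_one_add_smul_of_nonneg hinv
      ((Set.uIcc_of_le hτ ▸ hs).1)) n τ) hint]
  simp

theorem semigroup_sub_step_pow_eq_neg_integral_errorKernel_mul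
    (hinv : ∀ s : ℝ, 0 < s → IsUnit (1 + (s : ℂ) • A)) (n : ℕ) {τ : ℝ} (hτ : 0 ≤ τ) :
    semigroup A (n * τ) - step A τ ^ n = -((∫ s in (0 : ℝ)..τ, errorKernel A n τ s) * A) := by
  simp only [semigroup_sub_step_pow hinv n hτ, errorKernel_mul, ←
    intervalIntegral.integral_mul_const_of_intervalIntegrable
      (intervalIntegrable_errorKernel hinv n hτ)]

lemma norm_semigroup_sub_step_le (hC : 0 ≤ C)
    (hAE : ∀ t : ℝ, 0 < t → ‖A * semigroup A t‖ ≤ C / t)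
    (hAB : ∀ n : ℕ, 1 ≤ n → ∀ s : ℝ, 0 < s → ‖A * step A s ^ n‖ ≤ C / (n * s))
    {t : ℝ} (ht : 0 < t) (hu : IsUnit (1 + (t : ℂ) • A)) :
    ‖semigroup A t - step A t‖ ≤ C ^ 2 := by
  have hI : ‖∫ r in (0 : ℝ)..t, (r : ℂ) • (A * semigroup A r)‖ ≤ C * t := by
    refine (intervalIntegral.norm_integral_le_of_norm_le_const fun r hr => ?_).trans_eq
      (by rw [sub_zero, abs_of_pos ht])
    rw [Set.uIoc_of_le ht.le] at hr
    rw [norm_smul, Complex.norm_of_nonneg hr.1.le]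
    exact mul_norm_mul_semigroup_le hC hAE hr.1.le le_rfl
  have hB : t * ‖A * step A t ^ 1‖ ≤ C := mul_norm_mul_step_pow_le hAB le_rfl ht (by simp)
  rw [semigroup_sub_step hu, norm_neg, ← pow_one (step A t)]
  calc _ ≤ (C * t) * ‖A * step A t ^ 1‖ := by grw [norm_mul_le, hI]
    _ = C * (t * ‖A * step A t ^ 1‖) := by ring
    _ ≤ C * C := by gcongr
    _ = C ^ 2 := (sq C).symm

lemma norm_semigroup_le (hC : 0 ≤ C)
    (hAE : ∀ t : ℝ, 0 < t → ‖A * semigroup A t‖ ≤ C / t)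
    (hAB : ∀ n : ℕ, 1 ≤ n → ∀ s : ℝ, 0 < s → ‖A * step A s ^ n‖ ≤ C / (n * s))
    (hinv : ∀ s : ℝ, 0 < s → IsUnit (1 + (s : ℂ) • A)) {t : ℝ} (ht : 0 ≤ t) :
    ‖semigroup A t‖ ≤ ‖(1 : 𝔸)‖ + C + C ^ 2 := by
  obtain rfl | ht := ht.eq_or_lt
  · rw [semigroup_zero]
    nlinarith
  calc ‖semigroup A t‖ = ‖(semigroup A t - step A t) + step A t‖ := by rw [sub_add_cancel]
    _ ≤ C ^ 2 + (‖(1 : 𝔸)‖ + C) := by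
        grw [norm_add_le, norm_semigroup_sub_step_le hC hAE hAB ht (hinv t ht),
          norm_step_le hAB ht (hinv t ht)]
    _ = ‖(1 : 𝔸)‖ + C + C ^ 2 := by ring

lemma norm_step_pow_le (hC : 0 ≤ C)
    (hAE : ∀ t : ℝ, 0 < t → ‖A * semigroup A t‖ ≤ C / t)
    (hAB : ∀ n : ℕ, 1 ≤ n → ∀ s : ℝ, 0 < s → ‖A * step A s ^ n‖ ≤ C / (n * s))
    (hinv : ∀ s : ℝ, 0 < s → IsUnit (1 + (s : ℂ) • A))
    {M : ℝ} (hE : ∀ t : ℝ, 0 ≤ t → ‖semigroup A t‖ ≤ M) {n : ℕ} (hn : 1 ≤ n) {τ : ℝ}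
    (hτ : 0 < τ) : ‖step A τ ^ n‖ ≤ M + (1 + M) * C ^ 2 := by
  have hK := intervalIntegrable_errorKernel hinv n hτ.le
  have hsum : step A τ ^ n = semigroup A (n * τ) +
      ∫ s in (0 : ℝ)..τ, errorKernel A n τ s * A := by
    rw [intervalIntegral.integral_mul_const_of_intervalIntegrable hK, ← sub_neg_eq_add,
      ← semigroup_sub_step_pow_eq_neg_integral_errorKernel_mul hinv n hτ.le, sub_sub_cancel]
  calc ‖step A τ ^ n‖ ≤ M + (C / (τ / 2) * C + M * (C / (τ / 2)) * C) * (τ / 2) := by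
        grw [hsum, norm_add_le, hE _ (by positivity),
          intervalIntegral.norm_integral_le_of_halves hτ.le (hK.mul_const A)
            (fun s hs => norm_errorKernel_mul_le_of_le_half hC hAE hAB hn hs.1 hs.2)
            (fun s hs => norm_errorKernel_mul_le_of_half_lt hC hAB hE hn hτ hs.1 hs.2)]
    _ = M + (1 + M) * C ^ 2 := by field_simp

lemma norm_integral_errorKernel_le (hC : 0 ≤ C)
    (hAE : ∀ t : ℝ, 0 < t → ‖A * semigroup A t‖ ≤ C / t)
    (hAB : ∀ n : ℕ, 1 ≤ n → ∀ s : ℝ, 0 < s → ‖A * step A s ^ n‖ ≤ C / (n * s))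
    (hinv : ∀ s : ℝ, 0 < s → IsUnit (1 + (s : ℂ) • A)) {M M' : ℝ}
    (hE : ∀ t : ℝ, 0 ≤ t → ‖semigroup A t‖ ≤ M)
    (hB : ∀ m : ℕ, 1 ≤ m → ∀ s : ℝ, 0 < s → ‖step A s ^ m‖ ≤ M') (n : ℕ) {τ : ℝ} (hτ : 0 ≤ τ) :
    ‖∫ s in (0 : ℝ)..τ, errorKernel A n τ s‖ ≤ C * (M + M') / 2 * τ :=
  (intervalIntegral.norm_integral_le_of_halves hτ (intervalIntegrable_errorKernel hinv n hτ)
    (fun s hs => norm_errorKernel_le_of_le_half hC hAE hB n hs.1 hs.2)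
    (fun s hs => norm_errorKernel_le_of_half_lt hAB hE n hs.1 hs.2)).trans_eq (by ring)

end BackwardEuler

open BackwardEuler in
theorem backward_euler_error_operator_general
    {H : Type*} [NormedAddCommGroup H] [InnerProductSpace ℂ H] [CompleteSpace H]
    (A : H →L[ℂ] H)
    (E : ℝ → (H →L[ℂ] H))
    (hE : ∀ t : ℝ, E t = NormedSpace.exp (-((t : ℂ) • A)))
    (hinv : ∀ s : ℝ, 0 < s → IsUnit (1 + (s : ℂ) • A))
    (Apow : ℝ → (H →L[ℂ] H)) (hA1 : Apow 1 = A)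
    (C : ℝ) (hC : 0 < C)
    (hsmoothE : ∀ γ ∈ Set.Icc (0 : ℝ) (3 / 2), ∀ t : ℝ, 0 < t →
      ‖Apow γ * E t‖ ≤ C * t ^ (-γ))
    (hsmoothB : ∀ γ ∈ Set.Icc (0 : ℝ) (3 / 2), ∀ n : ℕ, 1 ≤ n → ∀ s : ℝ, 0 < s →
      ‖Apow γ * (Ring.inverse (1 + (s : ℂ) • A)) ^ n‖ ≤ C * (n : ℝ) ^ (-γ) * s ^ (-γ)) :
    (∀ n : ℕ, 1 ≤ n → ∀ τ : ℝ, 0 < τ →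
      E ((n : ℝ) * τ) - (Ring.inverse (1 + (τ : ℂ) • A)) ^ n =
        -∫ s in (0 : ℝ)..τ,
          (((n : ℝ) * s : ℝ) : ℂ) •
            (A * A * E ((n : ℝ) * (τ - s)) *
              (Ring.inverse (1 + (s : ℂ) • A)) ^ (n + 1))) ∧
    (∃ C' > (0 : ℝ), ∀ n : ℕ, 1 ≤ n → ∀ τ : ℝ, 0 < τ → ∀ v : H,
      ‖(E ((n : ℝ) * τ) - (Ring.inverse (1 + (τ : ℂ) • A)) ^ n) v‖ ≤
        C' * τ * ‖A v‖) := by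
  obtain rfl : E = semigroup A := funext hE
  have hAE (t : ℝ) (ht : 0 < t) : ‖A * semigroup A t‖ ≤ C / t := by
    simpa [hA1, Real.rpow_neg_one, div_eq_mul_inv] using hsmoothE 1 (by norm_num) t ht
  have hAB (n : ℕ) (hn : 1 ≤ n) (s : ℝ) (hs : 0 < s) : ‖A * step A s ^ n‖ ≤ C / (n * s) := by
    have h := hsmoothB 1 (by norm_num) n hn s hs
    rwa [hA1, Real.rpow_neg_one, Real.rpow_neg_one, mul_assoc, ← mul_inv, ← div_eq_mul_inv] at h
  set M := ‖(1 : H →L[ℂ] H)‖ + C + C ^ 2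
  have hEM (t : ℝ) (ht : 0 ≤ t) : ‖semigroup A t‖ ≤ M := norm_semigroup_le hC.le hAE hAB hinv ht
  have hBM (m : ℕ) (hm : 1 ≤ m) (s : ℝ) (hs : 0 < s) : ‖step A s ^ m‖ ≤ M + (1 + M) * C ^ 2 :=
    norm_step_pow_le hC.le hAE hAB hinv hEM hm hs
  refine ⟨fun n _ τ hτ => semigroup_sub_step_pow hinv n hτ.le,
    C * (M + (M + (1 + M) * C ^ 2)) / 2, by positivity, fun n _ τ hτ v => ?_⟩
  rw [show Ring.inverse (1 + (τ : ℂ) • A) = step A τ from rfl,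
    semigroup_sub_step_pow_eq_neg_integral_errorKernel_mul hinv n hτ.le,
    neg_apply, norm_neg, mul_apply_eq_comp]
  grw [ContinuousLinearMap.le_opNorm,
    norm_integral_errorKernel_le hC.le hAE hAB hinv hEM hBM n hτ.le]

/-- Backward-Euler error representation and smooth-data error bound: with
`E(t) = e^{-tA}` and `B(s) = (I + sA)⁻¹` satisfying the smoothing estimates
`‖A^γ E(t)‖ ≤ C t^{-γ}` and `‖A^γ B(s)ⁿ‖ ≤ C n^{-γ} s^{-γ}` for `γ ∈ [0, 3/2]`,
one has `E(nτ) − B(τ)ⁿ = −∫₀^τ n s A² E(n(τ−s)) B(s)^{n+1} ds` and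
`‖(E(nτ) − B(τ)ⁿ) v‖ ≤ C' τ ‖Av‖`. -/
theorem backward_euler_error_operator
    {H : Type*} [NormedAddCommGroup H] [InnerProductSpace ℂ H] [CompleteSpace H]
    (A : H →L[ℂ] H)
    (E : ℝ → (H →L[ℂ] H))
    (hE : ∀ t : ℝ, E t = NormedSpace.exp (-((t : ℂ) • A)))
    (hinv : ∀ s : ℝ, 0 < s → IsUnit (1 + (s : ℂ) • A))
    (Apow : ℝ → (H →L[ℂ] H)) (hA1 : Apow 1 = A) (hA2 : Apow 2 = A * A)
    (C : ℝ) (hC : 0 < C)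
    (hsmoothE : ∀ γ ∈ Set.Icc (0 : ℝ) (3 / 2), ∀ t : ℝ, 0 < t →
      ‖Apow γ * E t‖ ≤ C * t ^ (-γ))
    (hsmoothB : ∀ γ ∈ Set.Icc (0 : ℝ) (3 / 2), ∀ n : ℕ, 1 ≤ n → ∀ s : ℝ, 0 < s →
      ‖Apow γ * (Ring.inverse (1 + (s : ℂ) • A)) ^ n‖ ≤ C * (n : ℝ) ^ (-γ) * s ^ (-γ)) :
    (∀ n : ℕ, 1 ≤ n → ∀ τ : ℝ, 0 < τ →
      E ((n : ℝ) * τ) - (Ring.inverse (1 + (τ : ℂ) • A)) ^ n =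
        -∫ s in (0 : ℝ)..τ,
          (((n : ℝ) * s : ℝ) : ℂ) •
            (A * A * E ((n : ℝ) * (τ - s)) *
              (Ring.inverse (1 + (s : ℂ) • A)) ^ (n + 1))) ∧
    (∃ C' > (0 : ℝ), ∀ n : ℕ, 1 ≤ n → ∀ τ : ℝ, 0 < τ → ∀ v : H,
      ‖(E ((n : ℝ) * τ) - (Ring.inverse (1 + (τ : ℂ) • A)) ^ n) v‖ ≤
        C' * τ * ‖A v‖) :=
  backward_euler_error_operator_general A E hE hinv Apow hA1 C hC hsmoothE hsmoothB
end
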